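/- arXiv:2502.19523 — 2 statements merged into one kernel-verified Lean document; each statement's English description precedes it below -/
import Mathlib

section
/- For n > k > 0 with k odd, the number of k-element subsets of Z/nZ summing to 0 modulo n equals the number of necklaces with k black beads and n−k white beads, i.e., T(n,k,0) = N(n,k) = (1/n)·∑_{d | gcd(n,k)} φ(d)·C(n/d,k/d). -/
/-!
Both `T(n,k,0) * n` and `N(n,k) * n` equal `∑_{t ∈ ℤ/n} F(ord t)`, where
`F(e) = stableSubsetCount n k e` is `C(n/e, k/e)` if `e ∣ k` and `0` otherwise.

For `N` this is Burnside's lemma: a `k`-subset fixed by translation by `t` is a union of cosets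
of `⟨t⟩`, i.e. the preimage of a `(k / ord t)`-subset of `(ℤ/n) ⧸ ⟨t⟩`.

For `T`, orthogonality of the characters `a ↦ ψ(j a)` gives `n T = ∑_j ∑_{|Q| = k} ψ(j ΣQ)`,
and the inner sum is the `X^k`-coefficient of `∏_a (1 + ψ(j a) X) = (1 - (-X)^e)^(n/e)` with
`e = ord j`. This is a polynomial in `X^e`, and since `k` is odd every `e ∣ k` is odd, so the
coefficient is `F(e)`. Grouping the `t` by their order gives the totient formula.
-/

open Pointwise

/-- `T n k s` is the number of `k`-element subsets of `ℤ/nℤ` whose sum of elements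
is `s` modulo `n`. -/
noncomputable def T (n k : ℕ) (s : ℤ) : ℕ :=
  Nat.card {Q : Finset (ZMod n) // Q.card = k ∧ (∑ a ∈ Q, a) = (s : ZMod n)}

/-- `N n k` is the number of necklaces with `k` black beads and `n - k` white beads,
i.e., the number of orbits of `k`-element subsets of `ℤ/nℤ` under the translation
action of `ℤ/nℤ`. -/
noncomputable def N (n k : ℕ) : ℕ :=
  Nat.card {C : Set (Finset (ZMod n)) //
    ∃ Q : Finset (ZMod n), Q.card = k ∧ C = AddAction.orbit (ZMod n) Q}

open Finset Polynomial

def stableSubsetCount (n k e : ℕ) : ℕ := if e ∣ k then (n / e).choose (k / e) else 0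

section StableFinsets

variable {G : Type*} [AddCommGroup G] [Fintype G] (H : AddSubgroup G) [DecidableEq (G ⧸ H)]

lemma card_filter_mk_mem (R : Finset (G ⧸ H)) :
    #{g : G | (g : G ⧸ H) ∈ R} = Nat.card H * #R := by
  have := Nat.card_congr (QuotientAddGroup.preimageMkEquivAddSubgroupProdSet H (R : Set (G ⧸ H)))
  rw [Nat.card_prod, Nat.card_coe_set_eq, Nat.card_coe_set_eq, Set.ncard_coe_finset] at this
  rw [← this, ← Set.ncard_coe_finset]
  congr 1
  ext g
  simp

lemma image_mk_filter_mk_mem (R : Finset (G ⧸ H)) :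
    ({g : G | (g : G ⧸ H) ∈ R} : Finset G).image (↑) = R := by
  ext x
  induction x using QuotientAddGroup.induction_on
  simp only [mem_image, mem_filter, mem_univ, true_and]
  exact ⟨fun ⟨_, hg, hgx⟩ => hgx ▸ hg, fun hx => ⟨_, hx, rfl⟩⟩

variable [DecidableEq G]

lemma le_stabilizer_filter_mk_mem (R : Finset (G ⧸ H)) :
    H ≤ AddAction.stabilizer G ({g : G | (g : G ⧸ H) ∈ R} : Finset G) := by
  intro h hh
  rw [AddAction.mem_stabilizer_iff]
  refine eq_of_subset_of_card_le (fun x hx => ?_) (card_vadd_finset h _).ge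
  obtain ⟨g, hg, rfl⟩ := mem_vadd_finset.mp hx
  simpa [add_comm h, QuotientAddGroup.mk_add_of_mem g hh] using hg

lemma filter_mk_mem_image_mk {Q : Finset G} (hQ : H ≤ AddAction.stabilizer G Q) :
    ({g : G | (g : G ⧸ H) ∈ Q.image (↑)} : Finset G) = Q := by
  refine Subset.antisymm (fun g hg => ?_) (fun g hg => by simpa using ⟨g, hg, rfl⟩)
  obtain ⟨q, hq, hqg⟩ := mem_image.mp (mem_filter.mp hg).2
  have hgq : g - q ∈ H := by
    simpa [sub_eq_neg_add] using QuotientAddGroup.eq.mp hqg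
  rw [← AddAction.mem_stabilizer_iff.mp (hQ hgq)]
  exact mem_vadd_finset.mpr ⟨q, hq, sub_add_cancel g q⟩

end StableFinsets

theorem card_finset_le_stabilizer {G : Type*} [AddCommGroup G] [Finite G] [DecidableEq G]
    (H : AddSubgroup G) (k : ℕ) :
    Nat.card {Q : Finset G // #Q = k ∧ H ≤ AddAction.stabilizer G Q} =
      if Nat.card H ∣ k then H.index.choose (k / Nat.card H) else 0 := by
  classical
  have := Fintype.ofFinite G
  have hH : 0 < Nat.card H := Nat.card_pos
  have himage : ({Q : Finset G | #Q = k ∧ H ≤ AddAction.stabilizer G Q} : Finset _) =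
      ({R : Finset (G ⧸ H) | Nat.card H * #R = k} : Finset _).image
        fun R => ({g : G | (g : G ⧸ H) ∈ R} : Finset G) := by
    ext Q
    simp only [mem_filter, mem_univ, true_and, mem_image]
    constructor
    · rintro ⟨rfl, hQ⟩
      refine ⟨Q.image (↑), ?_, filter_mk_mem_image_mk H hQ⟩
      rw [← card_filter_mk_mem, filter_mk_mem_image_mk H hQ]
    · rintro ⟨R, rfl, rfl⟩
      exact ⟨card_filter_mk_mem H R, le_stabilizer_filter_mk_mem H R⟩
  rw [Nat.card_eq_fintype_card, Fintype.card_subtype, himage, card_image_of_injective _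
    fun R R' h => by rw [← image_mk_filter_mk_mem H R, h, image_mk_filter_mk_mem]]
  split_ifs with hdvd
  · obtain ⟨m, rfl⟩ := hdvd
    simp only [Nat.mul_div_cancel_left m hH, mul_right_inj' hH.ne', univ_filter_card_eq]
    rw [card_powersetCard, card_univ, ← Nat.card_eq_fintype_card, AddSubgroup.index]
  · rw [card_eq_zero, filter_eq_empty_iff]
    exact fun R _ hR => hdvd ⟨#R, hR.symm⟩

theorem card_orbits_powersetCard (G : Type*) {α : Type*} [AddGroup G] [AddAction G α]
    [DecidableEq α] (k : ℕ) :
    Nat.card (AddAction.orbitRel.Quotient G (Set.powersetCard α k)) =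
      Nat.card {C : Set (Finset α) // ∃ Q : Finset α, #Q = k ∧ C = AddAction.orbit G Q} := by
  refine Nat.card_congr (Equiv.ofBijective
    (Quotient.lift (fun Q => ⟨AddAction.orbit G (Q : Finset α), Q, Q.2, rfl⟩) ?_) ⟨?_, ?_⟩)
  · rintro Q R ⟨g, rfl⟩
    simp [AddAction.orbit_vadd]
  · refine Quotient.ind₂ fun Q R h => Quotient.sound ?_
    have horbit : AddAction.orbit G (Q : Finset α) = AddAction.orbit G (R : Finset α) :=
      congrArg Subtype.val h
    obtain ⟨g, hg⟩ := horbit ▸ AddAction.mem_orbit_self (Q : Finset α)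
    exact ⟨g, Subtype.ext hg⟩
  · rintro ⟨C, Q, hQ, rfl⟩
    exact ⟨⟦⟨Q, hQ⟩⟧, rfl⟩

section Burnside

variable {G : Type*} [AddCommGroup G] [Fintype G] [DecidableEq G] (k : ℕ)

theorem card_fixedBy_powersetCard (g : G) :
    Nat.card (AddAction.fixedBy (Set.powersetCard G k) g) =
      stableSubsetCount (Nat.card G) k (addOrderOf g) := by
  have e : AddAction.fixedBy (Set.powersetCard G k) g ≃
      {Q : Finset G // #Q = k ∧ AddSubgroup.zmultiples g ≤ AddAction.stabilizer G Q} :=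
    { toFun Q := ⟨Q.1.1, Q.1.2, AddSubgroup.zmultiples_le.mpr (congrArg Subtype.val Q.2)⟩
      invFun Q := ⟨⟨Q.1, Q.2.1⟩, Subtype.ext (AddSubgroup.zmultiples_le.mp Q.2.2)⟩ }
  have hindex := (AddSubgroup.zmultiples g).index_mul_card
  rw [Nat.card_zmultiples] at hindex
  rw [Nat.card_congr e, card_finset_le_stabilizer, Nat.card_zmultiples, stableSubsetCount,
    ← hindex, Nat.mul_div_cancel _ (addOrderOf_pos g)]

theorem card_orbits_powersetCard_mul_card :
    Nat.card (AddAction.orbitRel.Quotient G (Set.powersetCard G k)) * Nat.card G =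
      ∑ g : G, stableSubsetCount (Nat.card G) k (addOrderOf g) := by
  classical
  rw [Nat.card_eq_fintype_card, Nat.card_eq_fintype_card,
    ← AddAction.sum_card_fixedBy_eq_card_orbits_mul_card_addGroup]
  simp only [← Nat.card_eq_fintype_card, card_fixedBy_powersetCard]

end Burnside

lemma AddChar.map_finset_sum {A M ι : Type*} [AddCommMonoid A] [CommMonoid M] (ψ : AddChar A M)
    (s : Finset ι) (f : ι → A) : ψ (∑ i ∈ s, f i) = ∏ i ∈ s, ψ (f i) := by
  classical
  induction s using Finset.induction_on with
  | empty => simp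
  | insert i s hi ih => rw [sum_insert hi, prod_insert hi, map_add_eq_mul, ih]

lemma AddChar.isPrimitiveRoot_apply {A M : Type*} [AddMonoid A] [CommMonoid M] {ψ : AddChar A M}
    (hψ : Function.Injective ψ) (a : A) : IsPrimitiveRoot (ψ a) (addOrderOf a) where
  pow_eq_one := by rw [← map_nsmul_eq_pow, addOrderOf_nsmul_eq_zero, map_zero_eq_one]
  dvd_of_pow_eq_one l hl := addOrderOf_dvd_of_nsmul_eq_zero <| hψ <| by
    rw [map_nsmul_eq_pow, hl, map_zero_eq_one]

lemma prod_range_mul_eq_pow {M : Type*} [CommMonoid M] {f : ℕ → M} {e : ℕ}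
    (hf : Function.Periodic f e) (m : ℕ) :
    ∏ i ∈ range (e * m), f i = (∏ i ∈ range e, f i) ^ m := by
  induction m with
  | zero => simp
  | succ m ih =>
    rw [mul_add_one, prod_range_add, ih, pow_succ]
    congr 1
    refine prod_congr rfl fun i _ => ?_
    simpa [add_comm, mul_comm] using hf.nat_mul m i

section Polynomial

variable {R : Type*} [CommRing R]

lemma coeff_prod_one_add_C_mul_X {ι : Type*} (s : Finset ι) (f : ι → R) (k : ℕ) :
    (∏ i ∈ s, (1 + C (f i) * X)).coeff k = ∑ t ∈ s.powersetCard k, ∏ i ∈ t, f i := by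
  classical
  simp only [prod_one_add, finsetSum_coeff, prod_mul_distrib, ← map_prod, prod_const,
    coeff_C_mul_X_pow, powersetCard_eq_filter, sum_filter, eq_comm (a := k)]

lemma prod_range_one_add_C_pow_mul_X [IsDomain R] {μ : R} {e : ℕ} (hμ : IsPrimitiveRoot μ e)
    (he : 0 < e) : ∏ i ∈ range e, (1 + C (μ ^ i) * X) = 1 - (-X) ^ e := by
  -- Put `Y = 1` in `Y ^ e - (-X) ^ e = ∏ i, (Y + μ ^ i X)`, an identity over the domain `R[X]`.
  have h := congrArg (eval 1) <|
    X_pow_sub_C_eq_prod (hμ.map_of_injective C_injective) he (α := -X) rfl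
  simpa [eval_prod] using h.symm

lemma coeff_one_sub_neg_X_pow_pow {e k : ℕ} (he : 0 < e) (hk : Odd k) (m : ℕ) :
    ((1 - (-X) ^ e : R[X]) ^ m).coeff k = if e ∣ k then (m.choose (k / e) : R) else 0 := by
  have hexpand : (1 - (-X) ^ e : R[X]) ^ m = expand R e ((1 - C ((-1) ^ e) * X) ^ m) := by
    simp [neg_pow (X : R[X])]
  rw [hexpand, coeff_expand he]
  split_ifs with hdvd
  · rw [(hk.of_dvd_nat hdvd).neg_one_pow, map_neg, map_one, neg_one_mul, sub_neg_eq_add,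
      coeff_one_add_X_pow]
  · rfl

end Polynomial

section Characters

variable {n : ℕ} [NeZero n]

lemma prod_zmod_eq_prod_range {M : Type*} [CommMonoid M] (f : ZMod n → M) :
    ∏ a : ZMod n, f a = ∏ i ∈ range n, f i := by
  symm
  refine prod_nbij (fun i => (i : ZMod n)) (fun _ _ => mem_univ _) ?_ ?_ fun _ _ => rfl
  · intro i hi j hj hij
    simpa [ZMod.val_natCast_of_lt (mem_range.mp hi), ZMod.val_natCast_of_lt (mem_range.mp hj)]
      using congrArg ZMod.val hij
  · exact fun a _ => ⟨a.val, mem_range.mpr a.val_lt, ZMod.natCast_zmod_val a⟩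

theorem sum_powersetCard_prod_stdAddChar {k : ℕ} (hk : Odd k) (j : ZMod n) :
    ∑ Q ∈ powersetCard k univ, ∏ a ∈ Q, ZMod.stdAddChar (j * a) =
      (stableSubsetCount n k (addOrderOf j) : ℂ) := by
  set e := addOrderOf j
  have hμ : IsPrimitiveRoot (ZMod.stdAddChar j) e :=
    AddChar.isPrimitiveRoot_apply ZMod.injective_stdAddChar j
  have hpow (i : ℕ) : ZMod.stdAddChar (j * (i : ZMod n)) = ZMod.stdAddChar j ^ i := by
    rw [← AddChar.map_nsmul_eq_pow, nsmul_eq_mul, mul_comm]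
  have hprod : ∏ a : ZMod n, (1 + C (ZMod.stdAddChar (j * a)) * X) =
      (1 - (-X) ^ e) ^ (n / e) := by
    have hdvd : e ∣ n := by simpa using addOrderOf_dvd_natCard j
    rw [prod_zmod_eq_prod_range]
    nth_rw 1 [← Nat.mul_div_cancel' hdvd]
    rw [prod_range_mul_eq_pow, ← prod_range_one_add_C_pow_mul_X hμ (addOrderOf_pos j)]
    · simp only [hpow]
    · intro i
      simp only [hpow, pow_add, hμ.pow_eq_one, mul_one]
  rw [← coeff_prod_one_add_C_mul_X, hprod, coeff_one_sub_neg_X_pow_pow (addOrderOf_pos j) hk,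
    stableSubsetCount]
  split_ifs <;> simp [e]

theorem card_filter_sum_eq_zero_mul (k : ℕ) :
    (#{Q ∈ powersetCard k (univ : Finset (ZMod n)) | ∑ a ∈ Q, a = 0} : ℂ) * n =
      ∑ j : ZMod n, ∑ Q ∈ powersetCard k univ, ∏ a ∈ Q, ZMod.stdAddChar (j * a) := by
  have horth (Q : Finset (ZMod n)) : ∑ j : ZMod n, ∏ a ∈ Q, ZMod.stdAddChar (j * a) =
      if ∑ a ∈ Q, a = 0 then (n : ℂ) else 0 := by
    simp only [← AddChar.map_finset_sum, ← Finset.mul_sum Q (fun a => a)]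
    rw [AddChar.sum_mulShift _ (ZMod.isPrimitive_stdAddChar n), ZMod.card,
      Nat.cast_ite, Nat.cast_zero]
  rw [sum_comm, sum_congr rfl fun Q _ => horth Q, sum_ite, sum_const_zero, add_zero, sum_const,
    nsmul_eq_mul]

end Characters

theorem sum_addOrderOf_eq_sum_divisors {G M : Type*} [AddGroup G] [Fintype G] [IsAddCyclic G]
    [AddCommMonoid M] (f : ℕ → M) :
    ∑ g : G, f (addOrderOf g) = ∑ d ∈ (Fintype.card G).divisors, d.totient • f d := by
  classical
  rw [← sum_fiberwise_of_maps_to (g := addOrderOf) (t := (Fintype.card G).divisors)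
    fun g _ => Nat.mem_divisors.mpr ⟨addOrderOf_dvd_card, Fintype.card_ne_zero⟩]
  refine sum_congr rfl fun d hd => ?_
  rw [sum_congr rfl fun g hg => by rw [(mem_filter.mp hg).2], sum_const,
    IsAddCyclic.card_addOrderOf_eq_totient (Nat.mem_divisors.mp hd).1]

lemma T_zero_eq_card (n k : ℕ) [NeZero n] :
    T n k 0 = #{Q ∈ powersetCard k (univ : Finset (ZMod n)) | ∑ a ∈ Q, a = 0} := by
  rw [T, Nat.card_eq_fintype_card, Fintype.card_subtype, ← univ_filter_card_eq, filter_filter,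
    Int.cast_zero]

theorem stmt_11_general (n k : ℕ) (hkn : k < n) (hodd : Odd k) :
    T n k 0 = N n k ∧
    (T n k 0 : ℤ) * n =
      ∑ d ∈ (Nat.gcd n k).divisors,
        (Nat.totient d : ℤ) * (Nat.choose (n / d) (k / d) : ℤ) := by
  have : NeZero n := ⟨by omega⟩
  set S := ∑ t : ZMod n, stableSubsetCount n k (addOrderOf t) with hS_def
  have hT : T n k 0 * n = S := by
    have h := card_filter_sum_eq_zero_mul (n := n) k
    simp only [sum_powersetCard_prod_stdAddChar hodd] at h
    rw [T_zero_eq_card]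
    exact_mod_cast h
  have hN : N n k * n = S := by
    have h := card_orbits_powersetCard_mul_card (G := ZMod n) k
    rwa [card_orbits_powersetCard, Nat.card_zmod] at h
  have hS : S = ∑ d ∈ (n.gcd k).divisors, d.totient * (n / d).choose (k / d) := by
    rw [hS_def, sum_addOrderOf_eq_sum_divisors, ZMod.card, ← Nat.divisors_filter_dvd_of_dvd
      (NeZero.ne n) (Nat.gcd_dvd_left n k), sum_filter]
    refine sum_congr rfl fun d hd => ?_
    simp [stableSubsetCount, Nat.dvd_gcd_iff, Nat.dvd_of_mem_divisors hd]
  refine ⟨Nat.eq_of_mul_eq_mul_right (by omega) (hT.trans hN.symm), ?_⟩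
  exact_mod_cast hT.trans hS

/-- For odd `k`, `T(n,k,0) = N(n,k) = (1/n) ∑_{d ∣ gcd(n,k)} φ(d) C(n/d, k/d)`. -/
theorem stmt_11 (n k : ℕ) (hk : 0 < k) (hkn : k < n) (hodd : Odd k) :
    T n k 0 = N n k ∧
    (T n k 0 : ℤ) * n =
      ∑ d ∈ (Nat.gcd n k).divisors,
        (Nat.totient d : ℤ) * (Nat.choose (n / d) (k / d) : ℤ) :=
  stmt_11_general n k hkn hodd
end

section
/- For n > k > 0 with k even, T(n,k,k/2) = N(n,k), i.e., the number of k-element subsets of Z/nZ summing to k/2 modulo n equals the number of necklaces with k black beads and n−k white beads. -/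
open Pointwise

/-!
Multiplied by `n`, both `T(n,k,k/2)` and `N(n,k)` equal `∑_{t ∈ ℤ/n} c(ord t)`, where
`c(d) = C(n/d, k/d)` if `d ∣ k` and `c(d) = 0` otherwise.

For `N` this is Burnside's lemma: a `k`-subset fixed by the translation by `t` is a union of
cosets of `⟨t⟩`, i.e. the preimage of a `k/d`-subset of `(ℤ/n)/⟨t⟩`, where `d = ord t`.

For `T`, detect the condition `∑ Q = k/2` with the characters `x ↦ ζ^{jx}` of `ℤ/n`. The
`j`-th term is `ζ^{-jk/2} e_k(1, μ, …, μ^{n-1})` with `μ = ζ^j` of order `d = ord j`, and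
`∏_{i<n} (X + μ^i) = (X^d - (-1)^d)^{n/d}` gives `e_k = (-(-1)^d)^{k/d} C(n/d, k/d)` if `d ∣ k`.
Because `k` is even, `μ^{k/2}` is exactly this sign, so the `j`-th term is `c(d)`.

Grouping `t` by its order turns the common sum into `∑_{d ∣ gcd(n,k)} φ(d) C(n/d, k/d)`.
-/

open Polynomial Finset

/-- The number of `k`-subsets of an `n`-set that are unions of blocks of a fixed partition
into blocks of size `d`. -/
def periodicChoose (n k d : ℕ) : ℕ := if d ∣ k then (n / d).choose (k / d) else 0

section RootsOfUnity

variable {R : Type*} [CommRing R] {μ : R} {m : ℕ}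

theorem IsPrimitiveRoot.prod_X_add_C_pow_eq [IsDomain R] (hμ : IsPrimitiveRoot μ m)
    (hm : 0 < m) : ∏ i ∈ range m, (X + C (μ ^ i)) = X ^ m - C ((-1) ^ m) := by
  rw [X_pow_sub_C_eq_prod hμ hm rfl]
  simp [sub_eq_add_neg]

theorem prod_range_mul_of_pow_eq_one {M : Type*} [CommMonoid M] (hμ : μ ^ m = 1) (f : R → M)
    (q : ℕ) : ∏ i ∈ range (m * q), f (μ ^ i) = (∏ i ∈ range m, f (μ ^ i)) ^ q := by
  induction q with
  | zero => simp
  | succ q ih =>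
    rw [Nat.mul_succ, prod_range_add, ih, pow_succ]
    simp [pow_add, pow_mul, hμ]

theorem coeff_X_pow_sub_C_pow (hm : 0 < m) (c : R) (q j : ℕ) :
    ((X ^ m - C c) ^ q).coeff j =
      if m ∣ j then (-c) ^ (q - j / m) * q.choose (j / m) else 0 := by
  have : (X ^ m - C c) ^ q = expand R m ((X + C (-c)) ^ q) := by simp [sub_eq_add_neg]
  rw [this, coeff_expand hm, coeff_X_add_C_pow]

theorem IsPrimitiveRoot.sum_powersetCard_prod_pow [IsDomain R] (hμ : IsPrimitiveRoot μ m)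
    (hm : 0 < m) {k q : ℕ} (hk : k ≤ m * q) :
    ∑ Q ∈ powersetCard k (range (m * q)), ∏ i ∈ Q, μ ^ i =
      if m ∣ k then (-(-1) ^ m : R) ^ (k / m) * q.choose (k / m) else 0 := by
  have h := prod_X_add_C_coeff (range (m * q)) (μ ^ ·) (k := m * q - k) (by simp)
  rw [card_range, Nat.sub_sub_self hk, prod_range_mul_of_pow_eq_one hμ.pow_eq_one (X + C ·),
    hμ.prod_X_add_C_pow_eq hm, coeff_X_pow_sub_C_pow hm] at h
  have hdvd : m ∣ m * q - k ↔ m ∣ k := Nat.dvd_sub_iff_right hk (dvd_mul_right m q)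
  rw [← h]
  by_cases hmk : m ∣ k
  · rw [if_pos (hdvd.2 hmk), if_pos hmk]
    obtain ⟨b, rfl⟩ := hmk
    have hb : b ≤ q := Nat.le_of_mul_le_mul_left hk hm
    rw [← Nat.mul_sub, Nat.mul_div_cancel_left _ hm, Nat.mul_div_cancel_left _ hm,
      Nat.sub_sub_self hb, Nat.choose_symm hb]
  · rw [if_neg (mt hdvd.1 hmk), if_neg hmk]

theorem ZMod.map_valEmbedding_univ (n : ℕ) [NeZero n] :
    (univ : Finset (ZMod n)).map ⟨ZMod.val, ZMod.val_injective n⟩ = range n := by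
  ext i
  simp only [mem_map, mem_univ, true_and, Function.Embedding.coeFn_mk, mem_range]
  exact ⟨fun ⟨a, ha⟩ => ha ▸ a.val_lt, fun hi => ⟨i, ZMod.val_cast_of_lt hi⟩⟩

theorem IsPrimitiveRoot.sum_powersetCard_univ_prod_pow_val [IsDomain R] {n k : ℕ} [NeZero n]
    (hμ : IsPrimitiveRoot μ m) (hmn : m ∣ n) (hk : k ≤ n) :
    ∑ Q ∈ powersetCard k (univ : Finset (ZMod n)), ∏ a ∈ Q, μ ^ a.val =
      if m ∣ k then (-(-1) ^ m : R) ^ (k / m) * (n / m).choose (k / m) else 0 := by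
  have hm : 0 < m := Nat.pos_of_dvd_of_pos hmn (NeZero.pos n)
  have hn : n = m * (n / m) := (Nat.mul_div_cancel' hmn).symm
  rw [← hμ.sum_powersetCard_prod_pow hm (hn ▸ hk), ← hn, ← ZMod.map_valEmbedding_univ,
    powersetCard_map, sum_map]
  simp [prod_map]

theorem IsPrimitiveRoot.pow_div_two_eq [IsDomain R] (hμ : IsPrimitiveRoot μ m) {k : ℕ}
    (hk : Even k) (hmk : m ∣ k) : μ ^ (k / 2) = (-(-1) ^ m) ^ (k / m) := by
  obtain ⟨u, rfl⟩ := hmk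
  rcases m.eq_zero_or_pos with rfl | hm
  · simp
  rw [Nat.mul_div_cancel_left _ hm]
  rcases Nat.even_or_odd m with ⟨w, rfl⟩ | hmo
  · have hw : μ ^ w = -1 := by
      have := hμ.pow_of_dvd (p := w) (by omega) (Dvd.intro 2 (by ring))
      rw [← two_mul, Nat.mul_div_cancel _ (by omega)] at this
      exact this.eq_neg_one_of_two_right
    rw [show (w + w) * u / 2 = w * u by rw [show (w + w) * u = w * u * 2 by ring]; simp,
      pow_mul, hw, Even.neg_one_pow ⟨w, rfl⟩]
  · obtain ⟨v, rfl⟩ : Even u := (Nat.even_mul.1 hk).resolve_left (Nat.not_even_iff_odd.2 hmo)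
    rw [show m * (v + v) / 2 = m * v by rw [show m * (v + v) = m * v * 2 by ring]; simp,
      pow_mul, hμ.pow_eq_one, one_pow, ← two_mul, pow_mul]
    simp [hmo.neg_one_pow]

theorem IsPrimitiveRoot.sum_powersetCard_univ_prod_pow_val_div {K : Type*} [Field K] {μ : K}
    {n k : ℕ} [NeZero n] (hμ : IsPrimitiveRoot μ m) (hmn : m ∣ n) (hk : k ≤ n)
    (heven : Even k) :
    (∑ Q ∈ powersetCard k (univ : Finset (ZMod n)), ∏ a ∈ Q, μ ^ a.val) / μ ^ (k / 2) =
      periodicChoose n k m := by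
  have hμ0 : μ ≠ 0 := hμ.ne_zero (Nat.pos_of_dvd_of_pos hmn (NeZero.pos n)).ne'
  rw [hμ.sum_powersetCard_univ_prod_pow_val hmn hk, periodicChoose]
  split_ifs with hmk
  · rw [← hμ.pow_div_two_eq heven hmk]
    field_simp
  · simp

end RootsOfUnity

theorem AddChar.card_filter_mul_card_eq_sum {A ι R : Type*} [CommRing A] [Fintype A]
    [DecidableEq A] [CommRing R] [IsDomain R] {ψ : AddChar A R} (hψ : ψ.IsPrimitive)
    (S : Finset ι) (f : ι → A) (s : A) :
    (#{i ∈ S | f i = s} : R) * Fintype.card A = ∑ j : A, ∑ i ∈ S, ψ (j * (f i - s)) := by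
  rw [sum_comm]
  simp_rw [AddChar.sum_mulShift _ hψ, sub_eq_zero]
  push_cast
  rw [← sum_filter, sum_const, nsmul_eq_mul]

theorem AddChar.orderOf_apply {A M : Type*} [AddMonoid A] [Monoid M] {ψ : AddChar A M}
    (hψ : Function.Injective ψ) (a : A) : orderOf (ψ a) = addOrderOf a := by
  rw [← orderOf_ofAdd_eq_addOrderOf]
  exact orderOf_injective ψ.toMonoidHom hψ _

theorem AddChar.map_mul_sum_sub_natCast {n : ℕ} [NeZero n] {M : Type*} [DivisionCommMonoid M]
    (ψ : AddChar (ZMod n) M) (j : ZMod n) (Q : Finset (ZMod n)) (s : ℕ) :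
    ψ (j * (∑ a ∈ Q, a - s)) = (∏ a ∈ Q, ψ j ^ a.val) / ψ j ^ s := by
  have : j * ∑ a ∈ Q, a = (∑ a ∈ Q, a.val) • j := by
    simp [nsmul_eq_mul, mul_comm]
  rw [mul_sub, AddChar.map_sub_eq_div, this, AddChar.map_nsmul_eq_pow, prod_pow_eq_pow_sum,
    ← AddChar.map_nsmul_eq_pow ψ s, nsmul_eq_mul, mul_comm j]

theorem T_eq_card_filter (n k : ℕ) [NeZero n] (s : ℤ) :
    T n k s = #{Q ∈ powersetCard k (univ : Finset (ZMod n)) | ∑ a ∈ Q, a = (s : ZMod n)} := by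
  rw [T, Nat.card_eq_fintype_card, Fintype.card_subtype, powersetCard_eq_filter, powerset_univ,
    filter_filter]

theorem T_mul_eq_sum (n k : ℕ) [NeZero n] (hkn : k ≤ n) (heven : Even k) :
    (T n k (k / 2 : ℕ) : ℂ) * n = ∑ j : ZMod n, (periodicChoose n k (addOrderOf j) : ℂ) := by
  have hcount := AddChar.card_filter_mul_card_eq_sum (ZMod.isPrimitive_stdAddChar n)
    (powersetCard k univ) (fun Q => ∑ a ∈ Q, a) ((k / 2 : ℕ) : ZMod n)
  rw [ZMod.card] at hcount
  rw [T_eq_card_filter, Int.cast_natCast, hcount]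
  refine sum_congr rfl fun j _ => ?_
  have hprim : IsPrimitiveRoot (ZMod.stdAddChar j) (addOrderOf j) :=
    AddChar.orderOf_apply ZMod.injective_stdAddChar j ▸ IsPrimitiveRoot.orderOf _
  simp_rw [AddChar.map_mul_sum_sub_natCast]
  rw [← sum_div, hprim.sum_powersetCard_univ_prod_pow_val_div
    (addOrderOf_dvd_card.trans (ZMod.card n).dvd) hkn heven]

section FixedFinsets

variable {G : Type*} [AddCommGroup G] [Fintype G] (H : AddSubgroup G) [DecidableEq (G ⧸ H)]

def preimageMk (S : Finset (G ⧸ H)) : Finset G := {x | (x : G ⧸ H) ∈ S}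

variable {H}

theorem mem_preimageMk {S : Finset (G ⧸ H)} {x : G} :
    x ∈ preimageMk H S ↔ (x : G ⧸ H) ∈ S := by
  simp [preimageMk]

theorem image_mk_preimageMk (S : Finset (G ⧸ H)) : (preimageMk H S).image (↑) = S := by
  ext y
  induction y using QuotientAddGroup.induction_on
  simp only [mem_image, mem_preimageMk]
  exact ⟨fun ⟨x, hx, hxy⟩ => hxy ▸ hx, fun hy => ⟨_, hy, rfl⟩⟩

theorem card_preimageMk (S : Finset (G ⧸ H)) : #(preimageMk H S) = Nat.card H * #S := by
  have h := Nat.card_congr (QuotientAddGroup.preimageMkEquivAddSubgroupProdSet H S)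
  rw [Nat.card_prod, Nat.card_coe_set_eq, Nat.card_coe_set_eq, Set.ncard_coe_finset] at h
  rw [← h, ← Set.ncard_coe_finset]
  congr 1
  ext x
  simp [mem_preimageMk]

theorem vadd_preimageMk [DecidableEq G] {t : G} (ht : t ∈ H) (S : Finset (G ⧸ H)) :
    t +ᵥ preimageMk H S = preimageMk H S := by
  ext x
  rw [← neg_neg t, Finset.mem_neg_vadd_finset_iff, mem_preimageMk, mem_preimageMk,
    vadd_eq_add, QuotientAddGroup.mk_add, (QuotientAddGroup.eq_zero_iff _).2 (neg_mem ht),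
    zero_add]

theorem preimageMk_image_mk [DecidableEq G] {Q : Finset G} (hQ : ∀ t ∈ H, t +ᵥ Q = Q) :
    preimageMk H (Q.image (↑)) = Q := by
  ext x
  rw [mem_preimageMk, mem_image]
  refine ⟨fun ⟨y, hy, hyx⟩ => ?_, fun hx => ⟨x, hx, rfl⟩⟩
  have hmem : -y + x ∈ H := QuotientAddGroup.eq.1 hyx
  rw [← hQ _ hmem]
  simpa using vadd_mem_vadd_finset (a := -y + x) hy

theorem natCard_finset_mul_card_eq (X : Type*) [Finite X] {m : ℕ} (hm : 0 < m) (k : ℕ) :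
    Nat.card {S : Finset X // m * #S = k} =
      if m ∣ k then (Nat.card X).choose (k / m) else 0 := by
  split_ifs with hmk
  · obtain ⟨b, rfl⟩ := hmk
    simp_rw [Nat.mul_div_cancel_left _ hm, Nat.mul_left_cancel_iff hm]
    exact Set.powersetCard.card X b
  · rw [Nat.card_eq_zero]
    exact Or.inl ⟨fun S => hmk ⟨_, S.2.symm⟩⟩

variable [DecidableEq G]

theorem natCard_vadd_finset_eq_self (t : G) (k : ℕ) :
    Nat.card {Q : Finset G // #Q = k ∧ t +ᵥ Q = Q} =
      Nat.card {S : Finset (G ⧸ AddSubgroup.zmultiples t) // addOrderOf t * #S = k} := by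
  classical
  have hfix {Q : Finset G} (hQ : t +ᵥ Q = Q) : ∀ s ∈ AddSubgroup.zmultiples t, s +ᵥ Q = Q :=
    AddSubgroup.zmultiples_le.2 (AddAction.mem_stabilizer_iff.2 hQ)
  have hcard (S : Finset (G ⧸ AddSubgroup.zmultiples t)) :
      #(preimageMk _ S) = addOrderOf t * #S := by
    rw [card_preimageMk, Nat.card_zmultiples]
  exact Nat.card_congr
    { toFun Q := ⟨Q.1.image (↑), by rw [← hcard, preimageMk_image_mk (hfix Q.2.2), Q.2.1]⟩
      invFun S := ⟨preimageMk _ S, (hcard _).trans S.2,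
        vadd_preimageMk (AddSubgroup.mem_zmultiples t) _⟩
      left_inv Q := Subtype.ext (preimageMk_image_mk (hfix Q.2.2))
      right_inv S := Subtype.ext (image_mk_preimageMk _) }

theorem natCard_fixedBy_powersetCard (t : G) (k : ℕ) :
    Nat.card (AddAction.fixedBy (Set.powersetCard G k) t) =
      periodicChoose (Nat.card G) k (addOrderOf t) := by
  classical
  have hquot : Nat.card (G ⧸ AddSubgroup.zmultiples t) = Nat.card G / addOrderOf t := by
    rw [AddSubgroup.card_eq_card_quotient_mul_card_addSubgroup (AddSubgroup.zmultiples t),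
      Nat.card_zmultiples, Nat.mul_div_cancel _ (addOrderOf_pos t)]
  rw [periodicChoose, ← hquot, ← natCard_finset_mul_card_eq _ (addOrderOf_pos t),
    ← natCard_vadd_finset_eq_self]
  exact Nat.card_congr
    { toFun Q := ⟨Q.1.1, Q.1.2, congrArg Subtype.val Q.2⟩
      invFun Q := ⟨⟨Q.1, Q.2.1⟩, Subtype.ext Q.2.2⟩
      left_inv _ := rfl
      right_inv _ := rfl }

end FixedFinsets

theorem natCard_orbitRel_quotient_powersetCard (G α : Type*) [AddGroup G] [AddAction G α]
    [DecidableEq α] (k : ℕ) :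
    Nat.card (AddAction.orbitRel.Quotient G (Set.powersetCard α k)) =
      Nat.card {C : Set (Finset α) // ∃ Q : Finset α, #Q = k ∧ C = AddAction.orbit G Q} := by
  let f (x : AddAction.orbitRel.Quotient G (Set.powersetCard α k)) : Set (Finset α) :=
    Subtype.val '' x.orbit
  have hf : Function.Injective f :=
    (Set.image_injective.2 Subtype.val_injective).comp AddAction.orbitRel.Quotient.orbit_injective
  have himage (Q : Set.powersetCard α k) :
      Subtype.val '' AddAction.orbit G Q = AddAction.orbit G Q.1 :=
    (Set.range_comp Subtype.val _).symm
  have hrange : Set.range f = {C | ∃ Q : Finset α, #Q = k ∧ C = AddAction.orbit G Q} := by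
    ext C
    constructor
    · rintro ⟨x, rfl⟩
      induction x using Quotient.inductionOn' with | h Q => exact ⟨Q.1, Q.2, himage Q⟩
    · rintro ⟨Q, hQ, rfl⟩
      exact ⟨Quotient.mk'' ⟨Q, hQ⟩, himage ⟨Q, hQ⟩⟩
  exact Nat.card_congr ((Equiv.ofInjective f hf).trans (Equiv.setCongr hrange))

theorem natCard_orbitRel_quotient_powersetCard_mul (G : Type*) [AddCommGroup G] [Fintype G]
    [DecidableEq G] (k : ℕ) :
    Nat.card (AddAction.orbitRel.Quotient G (Set.powersetCard G k)) * Nat.card G =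
      ∑ t : G, periodicChoose (Nat.card G) k (addOrderOf t) := by
  classical
  have burnside :=
    AddAction.sum_card_fixedBy_eq_card_orbits_mul_card_addGroup G (Set.powersetCard G k)
  simp_rw [← Nat.card_eq_fintype_card, natCard_fixedBy_powersetCard] at burnside
  exact burnside.symm

theorem IsAddCyclic.sum_addOrderOf {G M : Type*} [AddGroup G] [Fintype G] [IsAddCyclic G]
    [AddCommMonoid M] (f : ℕ → M) :
    ∑ g : G, f (addOrderOf g) = ∑ d ∈ (Nat.card G).divisors, d.totient • f d := by
  classical
  rw [Nat.card_eq_fintype_card, ← sum_fiberwise_of_maps_to (g := addOrderOf)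
    (t := (Fintype.card G).divisors)
    fun g _ => Nat.mem_divisors.2 ⟨addOrderOf_dvd_card, Fintype.card_ne_zero⟩]
  refine sum_congr rfl fun d hd => ?_
  rw [sum_congr rfl fun g hg => congrArg f (mem_filter.1 hg).2, sum_const,
    IsAddCyclic.card_addOrderOf_eq_totient (Nat.mem_divisors.1 hd).1]

theorem sum_divisors_totient_mul_periodicChoose {n : ℕ} (hn : n ≠ 0) (k : ℕ) :
    ∑ d ∈ n.divisors, d.totient * periodicChoose n k d =
      ∑ d ∈ (n.gcd k).divisors, d.totient * (n / d).choose (k / d) := by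
  simp_rw [periodicChoose, mul_ite, mul_zero, ← sum_filter]
  congr 1
  ext d
  simp [Nat.dvd_gcd_iff, hn]

theorem stmt_12_general (n k : ℕ) (hkn : k < n) (heven : Even k) :
    T n k (k / 2 : ℕ) = N n k ∧
    (T n k (k / 2 : ℕ) : ℤ) * n =
      ∑ d ∈ (Nat.gcd n k).divisors,
        (Nat.totient d : ℤ) * (Nat.choose (n / d) (k / d) : ℤ) := by
  have hn : n ≠ 0 := by omega
  have : NeZero n := ⟨hn⟩
  have hT : T n k (k / 2 : ℕ) * n = ∑ t : ZMod n, periodicChoose n k (addOrderOf t) := by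
    exact_mod_cast T_mul_eq_sum n k hkn.le heven
  have hN : N n k * n = ∑ t : ZMod n, periodicChoose n k (addOrderOf t) := by
    have burnside := natCard_orbitRel_quotient_powersetCard_mul (ZMod n) k
    rwa [Nat.card_zmod, natCard_orbitRel_quotient_powersetCard] at burnside
  have hsum : ∑ t : ZMod n, periodicChoose n k (addOrderOf t) =
      ∑ d ∈ (n.gcd k).divisors, d.totient * (n / d).choose (k / d) := by
    rw [IsAddCyclic.sum_addOrderOf, Nat.card_zmod]
    exact sum_divisors_totient_mul_periodicChoose hn k
  refine ⟨Nat.eq_of_mul_eq_mul_right (Nat.pos_of_ne_zero hn) (hT.trans hN.symm), ?_⟩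
  exact_mod_cast hT.trans hsum

/-- For even `k`, `T(n,k,k/2) = N(n,k) = (1/n) ∑_{d ∣ gcd(n,k)} φ(d) C(n/d, k/d)`. -/
theorem stmt_12 (n k : ℕ) (hk : 0 < k) (hkn : k < n) (heven : Even k) :
    T n k (k / 2 : ℕ) = N n k ∧
    (T n k (k / 2 : ℕ) : ℤ) * n =
      ∑ d ∈ (Nat.gcd n k).divisors,
        (Nat.totient d : ℤ) * (Nat.choose (n / d) (k / d) : ℤ) :=
  stmt_12_general n k hkn heven
end
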